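/- A multigraph G is Mengerian for time if and only if every subgraph H of G is Mengerian for time. -/

import Mathlib

/-- A (finite, loopless) multigraph: a vertex type, an edge type, and an
endpoints function assigning to each edge an unordered pair of distinct vertices. -/
structure Multigraph where
  V : Type
  E : Type
  fintypeV : Fintype V
  decEqV : DecidableEq V
  fintypeE : Fintype E
  decEqE : DecidableEq E
  ends : E → Sym2 V
  loopless : ∀ e, ¬ (ends e).IsDiag

attribute [instance] Multigraph.fintypeV Multigraph.decEqV Multigraph.fintypeE Multigraph.decEqE

/-- A temporal `s,z`-path in the temporal graph `(G, lam)`: an alternating sequence of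
pairwise distinct vertices and edges, starting at `s`, ending at `z`, whose edges appear
at non-decreasing timesteps. -/
structure TPath (G : Multigraph) (lam : G.E → ℕ) (s z : G.V) where
  verts : List G.V
  edges : List G.E
  len_eq : verts.length = edges.length + 1
  head_eq : verts.head? = some s
  last_eq : verts.getLast? = some z
  nodup : verts.Nodup
  ends_eq : ∀ (i : ℕ) (h : i < edges.length),
      G.ends (edges.get ⟨i, h⟩) = s(verts.get ⟨i, by omega⟩, verts.get ⟨i + 1, by omega⟩)
  mono : List.Chain' (· ≤ ·) (edges.map lam)

/-- The set of timesteps at which a temporal path is active. -/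
def TPath.times {G : Multigraph} {lam : G.E → ℕ} {s z : G.V} (P : TPath G lam s z) : Set ℕ :=
  {t | ∃ e ∈ P.edges, lam e = t}

/-- Two temporal `s,z`-paths are snapshot disjoint if they are not both active at any
common timestep. -/
def SnapDisjoint {G : Multigraph} {lam : G.E → ℕ} {s z : G.V} (P Q : TPath G lam s z) : Prop :=
  P.times ∩ Q.times = ∅

/-- A set `S` of timesteps is a snapshot `s,z`-cut if every temporal `s,z`-path uses an
edge active at some timestep in `S`. -/
def IsSnapCut (G : Multigraph) (lam : G.E → ℕ) (s z : G.V) (S : Set ℕ) : Prop :=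
  ∀ P : TPath G lam s z, ∃ e ∈ P.edges, lam e ∈ S

/-- `maxD G lam s z`: the maximum number of pairwise snapshot disjoint temporal `s,z`-paths. -/
noncomputable def maxD (G : Multigraph) (lam : G.E → ℕ) (s z : G.V) : ℕ :=
  sSup {k | ∃ f : Fin k → TPath G lam s z, ∀ i j, i ≠ j → SnapDisjoint (f i) (f j)}

/-- `minC G lam s z`: the minimum size of a snapshot `s,z`-cut. -/
noncomputable def minC (G : Multigraph) (lam : G.E → ℕ) (s z : G.V) : ℕ :=
  sInf {h | ∃ S : Finset ℕ, S.card = h ∧ IsSnapCut G lam s z ↑S}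

/-- A proper timefunction: each edge is active at a positive timestep, and no two parallel
edges are active at the same timestep. -/
def ProperTime (G : Multigraph) (lam : G.E → ℕ) : Prop :=
  (∀ e, 0 < lam e) ∧ ∀ e f, e ≠ f → G.ends e = G.ends f → lam e ≠ lam f

/-- `G` is Mengerian for time: for every proper timefunction and every pair of distinct
vertices, the maximum number of pairwise snapshot disjoint temporal `s,z`-paths equals the
minimum size of a snapshot `s,z`-cut. -/
def Mengerian (G : Multigraph) : Prop :=
  ∀ lam : G.E → ℕ, ProperTime G lam → ∀ s z : G.V, s ≠ z →
    maxD G lam s z = minC G lam s z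

/-- `H` is a subgraph of `G` (up to isomorphism): `H` embeds into `G`. -/
def IsSubgraph (H G : Multigraph) : Prop :=
  ∃ (fv : H.V → G.V) (fe : H.E → G.E),
    Function.Injective fv ∧ Function.Injective fe ∧
    ∀ e, G.ends (fe e) = (H.ends e).map fv

/-- The m-subdivision of the multiedge `xy` of `G`: delete all edges between `x` and `y`,
add a new vertex (`none`), and join it to each of `x` and `y` by as many parallel edges as
there were between `x` and `y`. -/
def Multigraph.msubdiv (G : Multigraph) (x y : G.V) : Multigraph where
  V := Option G.V
  E := {e : G.E // G.ends e ≠ s(x, y)} ⊕ ({e : G.E // G.ends e = s(x, y)} × Bool)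
  fintypeV := inferInstance
  decEqV := inferInstance
  fintypeE := inferInstance
  decEqE := inferInstance
  ends := fun t =>
    match t with
    | .inl e => (G.ends e.1).map some
    | .inr (_, true) => s(some x, (none : Option G.V))
    | .inr (_, false) => s((none : Option G.V), some y)
  loopless := by
    rintro (⟨e, he⟩ | ⟨e, b⟩)
    · simpa [Sym2.isDiag_map (Option.some_injective _)] using G.loopless e
    · cases b <;> simp [Sym2.mk_isDiag_iff]

/-- Isomorphism of multigraphs. -/
def MIso (G H : Multigraph) : Prop :=
  ∃ (fv : G.V ≃ H.V) (fe : G.E ≃ H.E), ∀ e, H.ends (fe e) = (G.ends e).map fv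

/-- `B` is obtained from `A` by m-subdividing one of its multiedges. -/
def SubdivStep (A B : Multigraph) : Prop :=
  ∃ x y : A.V, (∃ e, A.ends e = s(x, y)) ∧ MIso (A.msubdiv x y) B

/-- `H` is an m-topological minor of `G`: some subgraph of `G` can be obtained from `H` by
a sequence of m-subdivisions. -/
def IsMTopMinor (H G : Multigraph) : Prop :=
  ∃ K, Relation.ReflTransGen SubdivStep H K ∧ IsSubgraph K G

/-- The multigraph obtained from `G` by keeping only the edges satisfying `P`. -/
def Multigraph.restrictE (G : Multigraph) (P : G.E → Prop) [DecidablePred P] : Multigraph where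
  V := G.V
  E := {e : G.E // P e}
  fintypeV := G.fintypeV
  decEqV := G.decEqV
  fintypeE := inferInstance
  decEqE := inferInstance
  ends := fun e => G.ends e.1
  loopless := fun e => G.loopless e.1

/-- The underlying simple graph of a multigraph. -/
def Multigraph.simple (G : Multigraph) : SimpleGraph G.V where
  Adj u v := ∃ e, G.ends e = s(u, v)
  symm := by
    constructor
    rintro u v ⟨e, he⟩
    exact ⟨e, by rw [he, Sym2.eq_swap]⟩
  loopless := by
    constructor
    rintro u ⟨e, he⟩
    exact G.loopless e (by rw [he]; exact Sym2.mk_isDiag_iff.2 rfl)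

/-!
Given an embedding `H → G`, a proper timefunction `lam` on `H` and `s ≠ z`, extend `lam` to `G`
so that the edges of `H` keep their order in a middle band of times, the remaining edges at `z`
come before that band and all other edges after it. Then a temporal `s,z`-path of `G` either lies
in `H` or is one of the `k` direct `s z`-edges outside `H`, which gives `maxD G ≤ maxD H + k`;
conversely every snapshot cut of `G` contains the `k` early times of those direct edges, and its
remaining times, shifted back, cut `H`, which gives `minC H + k ≤ minC G`. Together with
`maxD G = minC G` and weak duality `maxD H ≤ minC H` this forces `maxD H = minC H`.
-/

namespace TPath

variable {G : Multigraph} {lam : G.E → ℕ} {s z : G.V} (P : TPath G lam s z)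

lemma verts_getElem_zero (h : 0 < P.verts.length) : P.verts[0] = s := by
  have := P.head_eq
  rwa [List.head?_eq_getElem?, List.getElem?_eq_getElem h, Option.some_inj] at this

lemma verts_getElem_eq_right {i : ℕ} (hi : i = P.edges.length) (h : i < P.verts.length) :
    P.verts[i] = z := by
  have := P.last_eq
  subst hi
  rwa [List.getLast?_eq_getElem?, P.len_eq, Nat.add_sub_cancel, List.getElem?_eq_getElem h,
    Option.some_inj] at this

lemma ends_getElem {i : ℕ} (hi : i < P.edges.length) :
    G.ends P.edges[i] =
      s(P.verts[i]'(by have := P.len_eq; omega), P.verts[i + 1]'(by have := P.len_eq; omega)) := by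
  simpa using P.ends_eq i hi

lemma edges_ne_nil (hsz : s ≠ z) : P.edges ≠ [] := by
  intro h
  have h0 : P.edges.length = 0 := by simp [h]
  have hlen := P.len_eq
  exact hsz ((P.verts_getElem_zero (by omega)).symm.trans
    (P.verts_getElem_eq_right h0.symm (by omega)))

lemma eq_length_of_mem_ends {i : ℕ} (hi : i < P.edges.length) (hz : z ∈ G.ends P.edges[i]) :
    i + 1 = P.edges.length := by
  have hlen := P.len_eq
  have hzl := P.verts_getElem_eq_right rfl (by omega)
  rw [P.ends_getElem hi, Sym2.mem_iff] at hz
  rcases hz with hz | hz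
  · have := P.nodup.getElem_inj_iff.1 (hzl.trans hz)
    omega
  · exact (P.nodup.getElem_inj_iff.1 (hzl.trans hz)).symm

lemma time_le_of_mem_ends {e e' : G.E} (he : e ∈ P.edges) (hz : z ∈ G.ends e)
    (he' : e' ∈ P.edges) : lam e' ≤ lam e := by
  obtain ⟨i, hi, rfl⟩ := List.mem_iff_getElem.1 he
  obtain ⟨j, hj, rfl⟩ := List.mem_iff_getElem.1 he'
  have hlast := P.eq_length_of_mem_ends hi hz
  have hsorted : P.edges.Pairwise (fun a b => lam a ≤ lam b) :=
    List.pairwise_map.1 (List.isChain_iff_pairwise.1 P.mono)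
  rcases Nat.lt_or_ge j i with hji | hij
  · exact List.pairwise_iff_getElem.1 hsorted j i hj hi hji
  · obtain rfl : j = i := by omega
    exact le_rfl

lemma exists_mem_ends_right (hsz : s ≠ z) : ∃ e ∈ P.edges, z ∈ G.ends e := by
  have hpos : 0 < P.edges.length := List.length_pos_iff.2 (P.edges_ne_nil hsz)
  refine ⟨P.edges[P.edges.length - 1], List.getElem_mem _, ?_⟩
  rw [P.ends_getElem, Sym2.mem_iff]
  exact Or.inr (P.verts_getElem_eq_right (by omega) _).symm

lemma exists_edges_eq_singleton (hsz : s ≠ z) (h : ∀ e ∈ P.edges, z ∈ G.ends e) :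
    ∃ a, P.edges = [a] ∧ G.ends a = s(s, z) := by
  have hpos : 0 < P.edges.length := List.length_pos_iff.2 (P.edges_ne_nil hsz)
  have hone := P.eq_length_of_mem_ends hpos (h _ (List.getElem_mem hpos))
  obtain ⟨a, ha⟩ := List.length_eq_one_iff.1 hone.symm
  refine ⟨a, ha, ?_⟩
  have h0 : P.edges[0] = a := by simp [ha]
  rw [← h0, P.ends_getElem hpos, P.verts_getElem_zero, P.verts_getElem_eq_right (by omega)]

def single (hsz : s ≠ z) (a : G.E) (ha : G.ends a = s(s, z)) : TPath G lam s z where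
  verts := [s, z]
  edges := [a]
  len_eq := rfl
  head_eq := rfl
  last_eq := rfl
  nodup := by simp [hsz]
  ends_eq i h := by
    obtain rfl : i = 0 := by simpa using h
    simpa using ha
  mono := List.isChain_singleton _

end TPath

section SnapshotDuality

variable {G : Multigraph} {lam : G.E → ℕ} {s z : G.V}

lemma isSnapCut_image_univ (hsz : s ≠ z) : IsSnapCut G lam s z ↑(Finset.univ.image lam) := by
  intro P
  obtain ⟨e, he, -⟩ := P.exists_mem_ends_right hsz
  exact ⟨e, he, by simp⟩

lemma SnapDisjoint.time_ne {P Q : TPath G lam s z} (h : SnapDisjoint P Q) {e e' : G.E}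
    (he : e ∈ P.edges) (he' : e' ∈ Q.edges) : lam e ≠ lam e' := fun heq =>
  Set.eq_empty_iff_forall_notMem.1 h (lam e) ⟨⟨e, he, rfl⟩, ⟨e', he', heq.symm⟩⟩

lemma card_le_card_of_isSnapCut {ι : Type*} [Fintype ι] {f : ι → TPath G lam s z}
    (hf : Pairwise fun i j => SnapDisjoint (f i) (f j)) {S : Finset ℕ}
    (hS : IsSnapCut G lam s z ↑S) : Fintype.card ι ≤ S.card := by
  choose e he heS using fun i => hS (f i)
  exact Finset.card_le_card_of_injOn (fun i => lam (e i)) (fun i _ => heS i)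
    fun i _ j _ hij => by_contra fun hne => (hf hne).time_ne (he i) (he j) hij

lemma bddAbove_card_snapDisjoint (hsz : s ≠ z) :
    BddAbove {k | ∃ f : Fin k → TPath G lam s z,
      ∀ i j, i ≠ j → SnapDisjoint (f i) (f j)} :=
  bddAbove_def.2 ⟨_, by
    rintro k ⟨_, hf⟩
    simpa using card_le_card_of_isSnapCut hf (isSnapCut_image_univ hsz)⟩

lemma exists_pairwise_snapDisjoint_maxD (hsz : s ≠ z) :
    ∃ f : Fin (maxD G lam s z) → TPath G lam s z,
      Pairwise fun i j => SnapDisjoint (f i) (f j) := by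
  have hne : {k | ∃ f : Fin k → TPath G lam s z,
      ∀ i j, i ≠ j → SnapDisjoint (f i) (f j)}.Nonempty :=
    ⟨0, finZeroElim, fun i => i.elim0⟩
  exact Nat.sSup_mem hne (bddAbove_card_snapDisjoint hsz)

lemma card_le_maxD (hsz : s ≠ z) {ι : Type*} [Fintype ι] {f : ι → TPath G lam s z}
    (hf : Pairwise fun i j => SnapDisjoint (f i) (f j)) : Fintype.card ι ≤ maxD G lam s z := by
  refine le_csSup (bddAbove_card_snapDisjoint hsz) ?_
  exact ⟨fun i => f ((Fintype.equivFin ι).symm i),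
      fun _ _ hij => hf ((Fintype.equivFin ι).symm.injective.ne hij)⟩

lemma exists_isSnapCut_card_minC (hsz : s ≠ z) :
    ∃ S : Finset ℕ, S.card = minC G lam s z ∧ IsSnapCut G lam s z ↑S := by
  have hne : {h | ∃ S : Finset ℕ, S.card = h ∧ IsSnapCut G lam s z ↑S}.Nonempty :=
    ⟨_, _, rfl, isSnapCut_image_univ hsz⟩
  exact Nat.sInf_mem hne

lemma minC_le_card {S : Finset ℕ} (hS : IsSnapCut G lam s z ↑S) : minC G lam s z ≤ S.card :=
  Nat.sInf_le ⟨S, rfl, hS⟩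

lemma maxD_le_minC (hsz : s ≠ z) : maxD G lam s z ≤ minC G lam s z := by
  obtain ⟨f, hf⟩ := exists_pairwise_snapDisjoint_maxD hsz
  obtain ⟨S, hS, hcut⟩ := exists_isSnapCut_card_minC hsz
  simpa [hS] using card_le_card_of_isSnapCut hf hcut

lemma SnapDisjoint.of_times_eq_image {H : Multigraph} {lamH : H.E → ℕ} {u v : H.V}
    {g : ℕ → ℕ} {P Q : TPath G lam s z} {P' Q' : TPath H lamH u v}
    (hP : P.times = g '' P'.times) (hQ : Q.times = g '' Q'.times) (h : SnapDisjoint P Q) :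
    SnapDisjoint P' Q' := by
  have : g '' (P'.times ∩ Q'.times) ⊆ ∅ := by
    rw [← h, hP, hQ]
    exact Set.image_inter_subset g _ _
  exact Set.image_eq_empty.1 (Set.subset_empty_iff.1 this)

end SnapshotDuality

structure Multigraph.Embedding (H G : Multigraph) where
  vert : H.V → G.V
  edge : H.E → G.E
  vert_injective : Function.Injective vert
  edge_injective : Function.Injective edge
  ends_edge : ∀ e, G.ends (edge e) = (H.ends e).map vert

namespace TPath

variable {H G : Multigraph} (φ : H.Embedding G) {lamH : H.E → ℕ} {lamG : G.E → ℕ}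
  {g : ℕ → ℕ} {s z : H.V}

def map (hg : Monotone g) (hlam : ∀ e, lamG (φ.edge e) = g (lamH e)) (P : TPath H lamH s z) :
    TPath G lamG (φ.vert s) (φ.vert z) where
  verts := P.verts.map φ.vert
  edges := P.edges.map φ.edge
  len_eq := by simp [P.len_eq]
  head_eq := by rw [List.head?_map, P.head_eq]; rfl
  last_eq := by rw [List.getLast?_map, P.last_eq]; rfl
  nodup := P.nodup.map φ.vert_injective
  ends_eq i h := by
    simp only [List.get_eq_getElem, List.getElem_map]
    rw [φ.ends_edge, P.ends_getElem (by simpa using h), Sym2.map_mk]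
  mono := by
    have : (P.edges.map φ.edge).map lamG = (P.edges.map lamH).map g := by
      simp [Function.comp_def, hlam]
    rw [this]
    exact (List.isChain_map _).2 (P.mono.imp fun _ _ h => hg h)

variable {φ}

lemma times_eq_image_of_edges_eq (hlam : ∀ e, lamG (φ.edge e) = g (lamH e)) {u v : G.V}
    {P : TPath G lamG u v} {Q : TPath H lamH s z} (h : P.edges = Q.edges.map φ.edge) :
    P.times = g '' Q.times := by
  ext t
  simp [TPath.times, h, hlam]

lemma exists_edges_eq_map (hg : StrictMono g) (hlam : ∀ e, lamG (φ.edge e) = g (lamH e))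
    (P : TPath G lamG (φ.vert s) (φ.vert z)) (hP : ∀ e ∈ P.edges, e ∈ Set.range φ.edge) :
    ∃ Q : TPath H lamH s z, P.edges = Q.edges.map φ.edge := by
  obtain ⟨le, hle⟩ : P.edges ∈ Set.range (List.map φ.edge) := by
    rw [Set.range_list_map]; exact hP
  have hverts : ∀ v ∈ P.verts, v ∈ Set.range φ.vert := by
    intro v hv
    obtain ⟨j, hj, rfl⟩ := List.mem_iff_getElem.1 hv
    rcases j with _ | i
    · exact ⟨s, (P.verts_getElem_zero hj).symm⟩
    · have hi : i < P.edges.length := by have := P.len_eq; omega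
      obtain ⟨e, he⟩ := hP _ (List.getElem_mem hi)
      have hmem : P.verts[i + 1] ∈ G.ends P.edges[i] := by
        rw [P.ends_getElem hi]; exact Sym2.mem_mk_right _ _
      rw [← he, φ.ends_edge, Sym2.mem_map] at hmem
      obtain ⟨a, -, ha⟩ := hmem
      exact ⟨a, ha⟩
  obtain ⟨lv, hlv⟩ : P.verts ∈ Set.range (List.map φ.vert) := by
    rw [Set.range_list_map]; exact hverts
  obtain ⟨_, _, hlen, hhead, hlast, hnodup, hends, hmono⟩ := P
  subst hle hlv
  refine ⟨⟨lv, le, by simpa using hlen, ?_, ?_, hnodup.of_map _, ?_, ?_⟩, rfl⟩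
  · exact Option.map_injective φ.vert_injective (by simpa [List.head?_map] using hhead)
  · exact Option.map_injective φ.vert_injective (by simpa [List.getLast?_map] using hlast)
  · intro i h
    have := hends i (by simpa using h)
    simp only [List.get_eq_getElem, List.getElem_map, φ.ends_edge] at this
    exact Sym2.map.injective φ.vert_injective this
  · simp only [List.map_map, Function.comp_def, hlam] at hmono
    exact (List.isChain_map lamH).2
      (((List.isChain_map _).1 hmono).imp fun _ _ h => hg.le_iff_le.1 h)

end TPath

namespace Multigraph.Embedding

variable {H G : Multigraph} (φ : H.Embedding G)

/-- The edges of `H` keep their relative order, at times in `(n, n + 1 + max lam]` where `n` is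
the number of edges of `G`; every other edge gets its own time, before all of these if it is
incident to `z` and after them otherwise. -/
noncomputable def extendTime (lam : H.E → ℕ) (z : G.V) : G.E → ℕ :=
  Function.extend φ.edge (fun e => Fintype.card G.E + 1 + lam e) fun e =>
    if z ∈ G.ends e then (Fintype.equivFin G.E e : ℕ) + 1
    else Fintype.card G.E + 2 + Finset.univ.sup lam + Fintype.equivFin G.E e

open Classical in
noncomputable def extraEdges (u v : G.V) : Finset G.E :=
  {e | e ∉ Set.range φ.edge ∧ G.ends e = s(u, v)}

section ExtendTime

variable {φ} {lam : H.E → ℕ} {z : G.V}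

lemma mem_extraEdges {u v : G.V} {e : G.E} :
    e ∈ φ.extraEdges u v ↔ e ∉ Set.range φ.edge ∧ G.ends e = s(u, v) := by
  simp only [extraEdges, Finset.mem_filter, Finset.mem_univ, true_and]

lemma extendTime_edge (e : H.E) :
    φ.extendTime lam z (φ.edge e) = Fintype.card G.E + 1 + lam e :=
  φ.edge_injective.extend_apply _ _ e

lemma extendTime_of_notMem_range {e : G.E} (he : e ∉ Set.range φ.edge) :
    φ.extendTime lam z e = if z ∈ G.ends e then (Fintype.equivFin G.E e : ℕ) + 1
      else Fintype.card G.E + 2 + Finset.univ.sup lam + Fintype.equivFin G.E e :=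
  Function.extend_apply' _ _ _ he

lemma extendTime_le_card_iff {e : G.E} :
    φ.extendTime lam z e ≤ Fintype.card G.E ↔ e ∉ Set.range φ.edge ∧ z ∈ G.ends e := by
  by_cases he : e ∈ Set.range φ.edge
  · obtain ⟨e, rfl⟩ := he
    simp only [extendTime_edge, Set.mem_range_self, not_true_eq_false, false_and, iff_false]
    omega
  · have := (Fintype.equivFin G.E e).isLt
    rw [extendTime_of_notMem_range he]
    split_ifs with hz <;> simp [he, hz]
    omega

lemma extendTime_le_iff {e : G.E} :
    φ.extendTime lam z e ≤ Fintype.card G.E + 1 + Finset.univ.sup lam ↔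
      e ∈ Set.range φ.edge ∨ z ∈ G.ends e := by
  by_cases he : e ∈ Set.range φ.edge
  · obtain ⟨e, rfl⟩ := he
    simpa [extendTime_edge] using Finset.le_sup (f := lam) (Finset.mem_univ e)
  · have := (Fintype.equivFin G.E e).isLt
    rw [extendTime_of_notMem_range he]
    split_ifs with hz <;> simp [he, hz] <;> omega

lemma extendTime_mem_Ioc_iff {e : G.E} :
    φ.extendTime lam z e ∈
        Set.Ioc (Fintype.card G.E) (Fintype.card G.E + 1 + Finset.univ.sup lam) ↔
      e ∈ Set.range φ.edge := by
  rw [Set.mem_Ioc, extendTime_le_iff, ← not_le, extendTime_le_card_iff]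
  tauto

lemma injOn_extendTime : Set.InjOn (φ.extendTime lam z) (Set.range φ.edge)ᶜ := by
  intro e he f hf hef
  rw [extendTime_of_notMem_range he, extendTime_of_notMem_range hf] at hef
  have := (Fintype.equivFin G.E e).isLt
  have := (Fintype.equivFin G.E f).isLt
  refine (Fintype.equivFin G.E).injective (Fin.ext ?_)
  split_ifs at hef <;> omega

lemma properTime_extendTime (hlam : ProperTime H lam) : ProperTime G (φ.extendTime lam z) := by
  refine ⟨fun e => ?_, fun e f hef hends => ?_⟩
  · by_contra hzero
    have h0 : φ.extendTime lam z e = 0 := by omega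
    obtain ⟨he, hz⟩ := extendTime_le_card_iff.1 (h0 ▸ Nat.zero_le _)
    rw [extendTime_of_notMem_range he, if_pos hz] at h0
    omega
  by_cases he : e ∈ Set.range φ.edge <;> by_cases hf : f ∈ Set.range φ.edge
  · obtain ⟨e, rfl⟩ := he
    obtain ⟨f, rfl⟩ := hf
    rw [φ.ends_edge, φ.ends_edge] at hends
    have := hlam.2 e f (fun h => hef (congrArg φ.edge h))
      (Sym2.map.injective φ.vert_injective hends)
    rw [extendTime_edge, extendTime_edge]
    omega
  · exact fun h => hf (extendTime_mem_Ioc_iff.1 (h ▸ extendTime_mem_Ioc_iff.2 he))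
  · exact fun h => he (extendTime_mem_Ioc_iff.1 (h ▸ extendTime_mem_Ioc_iff.2 hf))
  · exact fun h => hef (injOn_extendTime he hf h)

lemma tPath_extendTime_cases {u : G.V} (huz : u ≠ z) (P : TPath G (φ.extendTime lam z) u z) :
    (∀ e ∈ P.edges, e ∈ Set.range φ.edge) ∨
      ∃ a ∉ Set.range φ.edge, P.edges = [a] ∧ G.ends a = s(u, z) := by
  obtain ⟨g, hg, hzg⟩ := P.exists_mem_ends_right huz
  have hle : ∀ e ∈ P.edges, φ.extendTime lam z e ≤ φ.extendTime lam z g :=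
    fun e he => P.time_le_of_mem_ends hg hzg he
  by_cases hearly : φ.extendTime lam z g ≤ Fintype.card G.E
  · have hall : ∀ e ∈ P.edges, e ∉ Set.range φ.edge ∧ z ∈ G.ends e :=
      fun e he => extendTime_le_card_iff.1 ((hle e he).trans hearly)
    obtain ⟨a, ha, hends⟩ := P.exists_edges_eq_singleton huz fun e he => (hall e he).2
    exact Or.inr ⟨a, (hall a (ha ▸ List.mem_singleton_self a)).1, ha, hends⟩
  · left
    intro e he
    by_contra hne
    have hg_range : g ∈ Set.range φ.edge := by
      by_contra hg_range
      exact hearly (extendTime_le_card_iff.2 ⟨hg_range, hzg⟩)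
    by_cases hze : z ∈ G.ends e
    · exact hearly ((P.time_le_of_mem_ends he hze hg).trans
        (extendTime_le_card_iff.2 ⟨hne, hze⟩))
    · exact extendTime_le_iff.not.2 (by tauto)
        ((hle e he).trans (extendTime_le_iff.2 (Or.inl hg_range)))

end ExtendTime

variable {lam : H.E → ℕ} {s z : H.V}

lemma maxD_extendTime_le (hsz : s ≠ z) :
    maxD G (φ.extendTime lam (φ.vert z)) (φ.vert s) (φ.vert z) ≤
      maxD H lam s z + (φ.extraEdges (φ.vert s) (φ.vert z)).card := by
  classical
  obtain ⟨F, hF⟩ := exists_pairwise_snapDisjoint_maxD (lam := φ.extendTime lam (φ.vert z))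
    (φ.vert_injective.ne hsz)
  let p i := ∀ e ∈ (F i).edges, e ∈ Set.range φ.edge
  have hinside : Fintype.card {i // p i} ≤ maxD H lam s z := by
    choose Q hQ using fun i : {i // p i} =>
      (F i).exists_edges_eq_map (add_right_strictMono (a := Fintype.card G.E + 1))
        extendTime_edge i.2
    refine card_le_maxD hsz (f := Q) fun i j hij => ?_
    exact (hF (Subtype.val_injective.ne hij)).of_times_eq_image
      (TPath.times_eq_image_of_edges_eq extendTime_edge (hQ i))
      (TPath.times_eq_image_of_edges_eq extendTime_edge (hQ j))
  have houtside : Fintype.card {i // ¬ p i} ≤ (φ.extraEdges (φ.vert s) (φ.vert z)).card := by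
    have hsingle (i : {i // ¬ p i}) :
        ∃ a ∈ φ.extraEdges (φ.vert s) (φ.vert z), (F i).edges = [a] := by
      obtain ⟨a, ha, hFa, hends⟩ :=
        (φ.tPath_extendTime_cases (φ.vert_injective.ne hsz) (F i)).resolve_left i.2
      exact ⟨a, mem_extraEdges.2 ⟨ha, hends⟩, hFa⟩
    choose a ha hFa using hsingle
    rw [← Fintype.card_coe]
    refine Fintype.card_le_of_injective (fun i => ⟨a i, ha i⟩) fun i j hij => ?_
    by_contra hne
    refine (hF (Subtype.val_injective.ne hne)).time_ne (e := a i) (e' := a j) ?_ ?_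
      (congrArg _ (congrArg Subtype.val hij)) <;> simp [hFa]
  have hsplit := Fintype.card_subtype_compl p
  rw [Fintype.card_fin] at hsplit
  have := Fintype.card_subtype_le p
  omega

lemma minC_add_card_extraEdges_le (hsz : s ≠ z) :
    minC H lam s z + (φ.extraEdges (φ.vert s) (φ.vert z)).card ≤
      minC G (φ.extendTime lam (φ.vert z)) (φ.vert s) (φ.vert z) := by
  classical
  set lam' := φ.extendTime lam (φ.vert z)
  set A := φ.extraEdges (φ.vert s) (φ.vert z)
  have hsz' := φ.vert_injective.ne hsz
  have hA (a : G.E) (ha : a ∈ A) := mem_extraEdges.1 ha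
  obtain ⟨S, hS, hcut⟩ := exists_isSnapCut_card_minC hsz'
  have hAS : A.image lam' ⊆ S := by
    intro t ht
    obtain ⟨a, ha, rfl⟩ := Finset.mem_image.1 ht
    obtain ⟨e, he, heS⟩ := hcut (TPath.single hsz' a (hA a ha).2)
    obtain rfl : e = a := List.mem_singleton.1 he
    exact heS
  have hAcard : (A.image lam').card = A.card :=
    Finset.card_image_of_injOn fun a ha b hb => injOn_extendTime (hA a ha).1 (hA b hb).1
  have hHcut : IsSnapCut H lam s z ↑((S \ A.image lam').image (· - (Fintype.card G.E + 1))) := by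
    intro P
    obtain ⟨_, hmap, heS⟩ := hcut <|
      P.map φ (add_right_strictMono (a := Fintype.card G.E + 1)).monotone (lamG := lam')
        extendTime_edge
    obtain ⟨e, he, rfl⟩ := List.mem_map.1 hmap
    refine ⟨e, he, Finset.mem_image.2
      ⟨lam' (φ.edge e), Finset.mem_sdiff.2 ⟨heS, ?_⟩, ?_⟩⟩
    · intro hmem
      obtain ⟨a, ha, hae⟩ := Finset.mem_image.1 hmem
      have hearly : lam' a ≤ Fintype.card G.E :=
        extendTime_le_card_iff.2 ⟨(hA a ha).1, (hA a ha).2 ▸ Sym2.mem_mk_right _ _⟩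
      rw [hae] at hearly
      simp only [lam', extendTime_edge] at hearly
      omega
    · simp [lam', extendTime_edge]
  calc minC H lam s z + A.card
      ≤ ((S \ A.image lam').image (· - (Fintype.card G.E + 1))).card + (A.image lam').card := by
        rw [hAcard]; exact Nat.add_le_add_right (minC_le_card hHcut) _
    _ ≤ (S \ A.image lam').card + (A.image lam').card :=
        Nat.add_le_add_right Finset.card_image_le _
    _ = minC G lam' (φ.vert s) (φ.vert z) := by rw [Finset.card_sdiff_add_card_eq_card hAS, hS]

end Multigraph.Embedding

theorem Mengerian.of_embedding {H G : Multigraph} (φ : H.Embedding G) (hG : Mengerian G) :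
    Mengerian H := by
  intro lam hlam s z hsz
  have hmenger :=
    hG _ (φ.properTime_extendTime (z := φ.vert z) hlam) _ _ (φ.vert_injective.ne hsz)
  have hmax := φ.maxD_extendTime_le (lam := lam) hsz
  have hmin := φ.minC_add_card_extraEdges_le (lam := lam) hsz
  have hweak := maxD_le_minC (lam := lam) hsz
  omega

/-- `G` is Mengerian for time iff every subgraph of `G` is Mengerian for time. -/
theorem stmt3 (G : Multigraph) :
    Mengerian G ↔ ∀ H : Multigraph, IsSubgraph H G → Mengerian H := by
  refine ⟨fun hG H ⟨fv, fe, hfv, hfe, hends⟩ => hG.of_embedding ⟨fv, fe, hfv, hfe, hends⟩,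
    fun h => h G ⟨id, id, Function.injective_id, Function.injective_id, fun e => ?_⟩⟩
  simp
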